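/- Let q ≥ 2 be an integer and let ℓ, u, v, j be integers with 0 ≤ u ≤ ℓ, 0 ≤ v ≤ ℓ, max{0, v−u} ≤ j ≤ v and j ≤ ℓ−u. Then [ℓ−u, j]_q · [u, v−j]_q ≤ 16 · q^{(j−v)(ℓ−u−j)} · [ℓ, v]_q. -/

import Mathlib

/-!
Write `[a, b]_q` as a product of the factors `(q^{d+k} - 1)/(q^k - 1)` with `d = a - b` and
`k = 1, …, b`. Each factor lies between `q^d` and `q^d / (1 - q^{-k})`, and for `q ≥ 2` the
product `∏_k (1 - q^{-k})` is at least `1/4`, so `q^{b(a-b)} ≤ [a, b]_q ≤ 4 q^{b(a-b)}`.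
Bounding the two coefficients on the left from above and `[ℓ, v]_q` from below reduces the
claim to the exponent inequality
`j(ℓ-u-j) + (v-j)(u-v+j) ≤ (j-v)(ℓ-u-j) + v(ℓ-v)`,
whose two sides differ by `j(u+j-v) ≥ 0`.
-/

/-- The Gaussian binomial coefficient `[a, b]_q`, defined as
`∏_{i=0}^{b-1} (q^{a-i} - 1)/(q^{b-i} - 1)` for `0 ≤ b ≤ a`, and `0` otherwise. -/
noncomputable def gaussBinom (q : ℚ) (a b : ℤ) : ℚ :=
  if 0 ≤ b ∧ b ≤ a then
    ∏ i ∈ Finset.range b.toNat, (q ^ (a - i).toNat - 1) / (q ^ (b - i).toNat - 1)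
  else 0

open Finset

section OrderedField

variable {K : Type*} [Field K] [LinearOrder K] [IsStrictOrderedRing K]

lemma one_div_four_le_prod_one_sub_pow {r : K} (hr0 : 0 ≤ r) (hr : r ≤ 1 / 2) (b : ℕ) :
    1 / 4 ≤ ∏ k ∈ range b, (1 - r ^ (k + 1)) := by
  rcases Nat.eq_zero_or_pos b with rfl | hb
  · norm_num
  -- the stronger invariant `1/4 + r^(b+1)` survives each extra factor
  suffices key : 1 / 4 + r ^ (b + 1) ≤ ∏ k ∈ range b, (1 - r ^ (k + 1)) by
    linarith [pow_nonneg hr0 (b + 1)]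
  induction b, hb using Nat.le_induction with
  | base => simp only [prod_range_one, zero_add, pow_one]; nlinarith
  | succ n hn ih =>
    have hs0 : 0 ≤ r ^ (n + 1) := pow_nonneg hr0 _
    have hs : r ^ (n + 1) ≤ 1 / 4 :=
      calc r ^ (n + 1) ≤ r ^ 2 := pow_le_pow_of_le_one hr0 (by linarith) (by omega)
        _ ≤ (1 / 2) ^ 2 := pow_le_pow_left₀ hr0 hr 2
        _ = 1 / 4 := by norm_num
    calc 1 / 4 + r ^ (n + 1 + 1)
        ≤ (1 / 4 + r ^ (n + 1)) * (1 - r ^ (n + 1)) := by rw [pow_succ]; nlinarith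
      _ ≤ ∏ k ∈ range (n + 1), (1 - r ^ (k + 1)) := by
        rw [prod_range_succ]; exact mul_le_mul_of_nonneg_right ih (by linarith)

lemma pow_le_div_pow_sub_one {q : K} (hq : 1 < q) (d : ℕ) {k : ℕ} (hk : k ≠ 0) :
    q ^ d ≤ (q ^ (d + k) - 1) / (q ^ k - 1) := by
  have hqk : 1 < q ^ k := one_lt_pow₀ hq hk
  rw [le_div_iff₀ (by linarith), mul_sub, mul_one, ← pow_add]
  linarith [one_le_pow₀ (n := d) hq.le]

lemma div_pow_sub_one_le {q : K} (hq : 1 < q) (d : ℕ) {k : ℕ} (hk : k ≠ 0) :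
    (q ^ (d + k) - 1) / (q ^ k - 1) ≤ q ^ d / (1 - q⁻¹ ^ k) := by
  have hqk : 1 < q ^ k := one_lt_pow₀ hq hk
  calc (q ^ (d + k) - 1) / (q ^ k - 1) ≤ q ^ (d + k) / (q ^ k - 1) := by
        gcongr; linarith
    _ = q ^ d / (1 - q⁻¹ ^ k) := by
        rw [inv_pow]; field_simp; ring

end OrderedField

lemma gaussBinom_natCast_eq_prod (q : ℚ) {d b : ℕ} :
    gaussBinom q ↑(d + b) b = ∏ k ∈ range b, (q ^ (d + (k + 1)) - 1) / (q ^ (k + 1) - 1) := by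
  rw [gaussBinom, if_pos ⟨by positivity, by omega⟩, Int.toNat_natCast,
    ← prod_range_reflect]
  refine prod_congr rfl fun i hi => ?_
  have hi : i < b := mem_range.mp hi
  rw [show ((↑(d + b) : ℤ) - ↑(b - 1 - i)).toNat = d + (i + 1) by omega,
    show ((b : ℤ) - ↑(b - 1 - i)).toNat = i + 1 by omega]

lemma pow_le_gaussBinom {q : ℚ} (hq : 1 < q) (d b : ℕ) :
    q ^ (b * d) ≤ gaussBinom q ↑(d + b) b := by
  rw [gaussBinom_natCast_eq_prod]
  calc q ^ (b * d) = ∏ _k ∈ range b, q ^ d := by rw [prod_const, card_range, pow_mul']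
    _ ≤ _ := prod_le_prod (fun _ _ => by positivity)
      fun k _ => pow_le_div_pow_sub_one hq d k.succ_ne_zero

lemma gaussBinom_le_four_mul_pow {q : ℚ} (hq : 2 ≤ q) (d b : ℕ) :
    gaussBinom q ↑(d + b) b ≤ 4 * q ^ (b * d) := by
  have hq1 : 1 < q := by linarith
  have hr : q⁻¹ ≤ 1 / 2 := by rw [one_div]; exact inv_anti₀ (by norm_num) hq
  have hprod := one_div_four_le_prod_one_sub_pow (inv_nonneg.mpr (by linarith)) hr b
  calc gaussBinom q ↑(d + b) b ≤ ∏ k ∈ range b, q ^ d / (1 - q⁻¹ ^ (k + 1)) := by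
        rw [gaussBinom_natCast_eq_prod]
        refine prod_le_prod (fun k _ => ?_) fun k _ => div_pow_sub_one_le hq1 d k.succ_ne_zero
        exact (pow_le_div_pow_sub_one hq1 d k.succ_ne_zero).trans' (by positivity)
    _ = q ^ (b * d) / ∏ k ∈ range b, (1 - q⁻¹ ^ (k + 1)) := by
        rw [prod_div_distrib, prod_const, card_range, pow_mul']
    _ ≤ q ^ (b * d) / (1 / 4) := by gcongr
    _ = 4 * q ^ (b * d) := by ring

lemma zpow_le_gaussBinom {q : ℚ} (hq : 1 < q) {a b : ℤ} (hb : 0 ≤ b) (hba : b ≤ a) :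
    q ^ (b * (a - b)) ≤ gaussBinom q a b := by
  lift b to ℕ using hb
  obtain ⟨d, rfl⟩ : ∃ d : ℕ, a = ↑(d + b) := ⟨(a - b).toNat, by omega⟩
  simpa [← zpow_natCast] using pow_le_gaussBinom hq d b

lemma gaussBinom_le_four_mul_zpow {q : ℚ} (hq : 2 ≤ q) {a b : ℤ} (hb : 0 ≤ b)
    (hba : b ≤ a) : gaussBinom q a b ≤ 4 * q ^ (b * (a - b)) := by
  lift b to ℕ using hb
  obtain ⟨d, rfl⟩ : ∃ d : ℕ, a = ↑(d + b) := ⟨(a - b).toNat, by omega⟩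
  simpa [← zpow_natCast] using gaussBinom_le_four_mul_pow hq d b

theorem stmt4_general (q ℓ u v j : ℕ) (hq : 2 ≤ q)
    (hj0 : v ≤ u + j) (hjv : j ≤ v) (hjl : u + j ≤ ℓ) :
    gaussBinom q ((ℓ : ℤ) - u) j * gaussBinom q u ((v : ℤ) - j)
      ≤ 16 * (q : ℚ) ^ (((j : ℤ) - v) * ((ℓ : ℤ) - u - j)) * gaussBinom q ℓ v := by
  have hq2 : (2 : ℚ) ≤ q := by exact_mod_cast hq
  have hq1 : (1 : ℚ) < q := by linarith
  set E : ℤ := ((j : ℤ) - v) * ((ℓ : ℤ) - u - j)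
  have hexp : (j : ℤ) * ((ℓ : ℤ) - u - j) + ((v : ℤ) - j) * (u - ((v : ℤ) - j))
      ≤ E + v * ((ℓ : ℤ) - v) := by
    have : (0 : ℤ) ≤ j * ((u : ℤ) + j - v) := mul_nonneg (by positivity) (by omega)
    linarith
  have hB_nonneg : 0 ≤ gaussBinom q u ((v : ℤ) - j) :=
    (zpow_le_gaussBinom hq1 (by omega) (by omega)).trans' (by positivity)
  calc gaussBinom q ((ℓ : ℤ) - u) j * gaussBinom q u ((v : ℤ) - j)
      ≤ (4 * (q : ℚ) ^ ((j : ℤ) * ((ℓ : ℤ) - u - j)))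
          * (4 * (q : ℚ) ^ (((v : ℤ) - j) * (u - ((v : ℤ) - j)))) := by
        gcongr
        · exact gaussBinom_le_four_mul_zpow hq2 (by omega) (by omega)
        · exact gaussBinom_le_four_mul_zpow hq2 (by omega) (by omega)
    _ = 16 * (q : ℚ) ^ ((j : ℤ) * ((ℓ : ℤ) - u - j)
          + ((v : ℤ) - j) * (u - ((v : ℤ) - j))) := by
        rw [zpow_add₀ (by positivity)]; ring
    _ ≤ 16 * ((q : ℚ) ^ E * (q : ℚ) ^ ((v : ℤ) * ((ℓ : ℤ) - v))) := by
        rw [← zpow_add₀ (by positivity)]; gcongr; exact hq1.le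
    _ ≤ 16 * (q : ℚ) ^ E * gaussBinom q ℓ v := by
        rw [← mul_assoc]; gcongr; exact zpow_le_gaussBinom hq1 (by omega) (by omega)

/-- For `q ≥ 2`, `0 ≤ u ≤ ℓ`, `0 ≤ v ≤ ℓ`, `max{0, v−u} ≤ j ≤ v`, `j ≤ ℓ−u`:
`[ℓ−u, j]_q · [u, v−j]_q ≤ 16 · q^{(j−v)(ℓ−u−j)} · [ℓ, v]_q`. -/
theorem stmt4 (q ℓ u v j : ℕ) (hq : 2 ≤ q)
    (hu : u ≤ ℓ) (hv : v ≤ ℓ) (hj0 : v ≤ u + j) (hjv : j ≤ v) (hjl : u + j ≤ ℓ) :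
    gaussBinom q ((ℓ : ℤ) - u) j * gaussBinom q u ((v : ℤ) - j)
      ≤ 16 * (q : ℚ) ^ (((j : ℤ) - v) * ((ℓ : ℤ) - u - j)) * gaussBinom q ℓ v :=
  stmt4_general q ℓ u v j hq hj0 hjv hjl
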